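/- arXiv:1909.02245 — 7 statements merged into one kernel-verified Lean document; each statement's English description precedes it below -/
import Mathlib

section
/- Let a,b ∈ ℝ, h ∈ 𝓑_a^b and let B be a medial limit with respect to (Ω,𝒜,P). Then B_h is bounded with sup_{x∈[0,1]} |B_h(x)| ≤ ‖h‖, B_h ∈ 𝓜_a^b (in particular B_h(0) = a and B_h(1) = b), and T B_h = B_h. -/
open MeasureTheory unitInterval

noncomputable section

/-- A bounded real sequence. -/
def IsBddSeq (x : ℕ → ℝ) : Prop := ∃ C : ℝ, ∀ n, |x n| ≤ C

/-- A Banach limit: a linear (on bounded sequences), positive, shift-invariant and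
normalized functional on the space of bounded real sequences. -/
structure BanachLimit where
  toFun : (ℕ → ℝ) → ℝ
  map_add : ∀ x y : ℕ → ℝ, IsBddSeq x → IsBddSeq y →
    toFun (fun n => x n + y n) = toFun x + toFun y
  map_smul : ∀ (c : ℝ) (x : ℕ → ℝ), IsBddSeq x →
    toFun (fun n => c * x n) = c * toFun x
  nonneg : ∀ x : ℕ → ℝ, IsBddSeq x → (∀ n, 0 ≤ x n) → 0 ≤ toFun x
  shift : ∀ x : ℕ → ℝ, IsBddSeq x → toFun (fun n => x (n + 1)) = toFun x
  norm_one : toFun (fun _ => (1 : ℝ)) = 1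

/-- A medial limit with respect to a measure `P`: a Banach limit which commutes with
integration of uniformly bounded sequences of measurable functions. -/
def BanachLimit.IsMedial {Ω : Type*} [MeasurableSpace Ω] (B : BanachLimit)
    (P : Measure Ω) : Prop :=
  ∀ h : ℕ → Ω → ℝ, (∃ C : ℝ, ∀ m ω, |h m ω| ≤ C) → (∀ m, Measurable (h m)) →
    Measurable (fun ω => B.toFun (fun m => h m ω)) ∧
      ∫ ω, B.toFun (fun m => h m ω) ∂P = B.toFun (fun m => ∫ ω, h m ω ∂P)

/-- The operator `T`, `(Th)(x) = ∫_Ω h(f(x,ω)) dP(ω)`. -/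
def Tof {Ω : Type*} [MeasurableSpace Ω] (P : Measure Ω)
    (f : unitInterval → Ω → unitInterval) (h : unitInterval → ℝ) :
    unitInterval → ℝ :=
  fun x => ∫ ω, h (f x ω) ∂P

/-- The supremum norm of a function on `[0,1]`. -/
def supNorm (h : unitInterval → ℝ) : ℝ := ⨆ x, |h x|

/-- Membership in `𝓜([0,1],ℝ)`: `h` is bounded and `ω ↦ h (f x ω)` is measurable
for every `x`. -/
def MemM {Ω : Type*} [MeasurableSpace Ω]
    (f : unitInterval → Ω → unitInterval) (h : unitInterval → ℝ) : Prop :=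
  (∃ C : ℝ, ∀ x, |h x| ≤ C) ∧ ∀ x, Measurable fun ω => h (f x ω)

/-- The function `B_h(x) = B((T^m h(x))_{m ≥ 1})`. -/
def BLof {Ω : Type*} [MeasurableSpace Ω] (P : Measure Ω)
    (f : unitInterval → Ω → unitInterval) (B : BanachLimit)
    (h : unitInterval → ℝ) : unitInterval → ℝ :=
  fun x => B.toFun fun m => (Tof P f)^[m + 1] h x

/-- The function `g_k = Σ_{l=0}^{k-1} T^l g` (meaningful for `k ≥ 1`). -/
def gk {Ω : Type*} [MeasurableSpace Ω] (P : Measure Ω)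
    (f : unitInterval → Ω → unitInterval) (g : unitInterval → ℝ) (k : ℕ) :
    unitInterval → ℝ :=
  fun x => ∑ l ∈ Finset.range k, (Tof P f)^[l] g x

/-- The family `𝒢 = {g_k : k ≥ 1}` is bounded in the supremum norm. -/
def GBdd {Ω : Type*} [MeasurableSpace Ω] (P : Measure Ω)
    (f : unitInterval → Ω → unitInterval) (g : unitInterval → ℝ) : Prop :=
  ∃ C : ℝ, ∀ k : ℕ, 1 ≤ k → ∀ x, |gk P f g k x| ≤ C

/-- The function `B_*(x) = B((g_k(x))_{k ≥ 1})`. -/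
def BStar {Ω : Type*} [MeasurableSpace Ω] (P : Measure Ω)
    (f : unitInterval → Ω → unitInterval) (B : BanachLimit)
    (g : unitInterval → ℝ) : unitInterval → ℝ :=
  fun x => B.toFun fun k => gk P f g (k + 1) x

/-- `φ` satisfies equation (E_g): `ω ↦ φ(f(x,ω))` is measurable for every `x` and
`φ(x) = ∫_Ω φ(f(x,ω)) dP(ω) + g(x)` for every `x`. -/
def SatEq {Ω : Type*} [MeasurableSpace Ω] (P : Measure Ω)
    (f : unitInterval → Ω → unitInterval) (g φ : unitInterval → ℝ) : Prop :=
  (∀ x, Measurable fun ω => φ (f x ω)) ∧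
    ∀ x, φ x = (∫ ω, φ (f x ω) ∂P) + g x

/-- The class `𝓑_a^b` is closed under the Banach limit `B`. -/
def ClosedUnder {Ω : Type*} [MeasurableSpace Ω] (P : Measure Ω)
    (f : unitInterval → Ω → unitInterval) (𝓑 : Submodule ℝ (unitInterval → ℝ))
    (a b : ℝ) (B : BanachLimit) : Prop :=
  ∀ h : unitInterval → ℝ, h ∈ 𝓑 → h 0 = a → h 1 = b →
    BLof P f B h ∈ 𝓑 ∧ BLof P f B h 0 = a ∧ BLof P f B h 1 = b

/-- Auxiliary: Banach limit of a constant sequence. -/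
lemma BanachLimit.const_lim (B : BanachLimit) (c : ℝ) : B.toFun (fun _ => c) = c := by
  have := B.map_smul c (fun _ => 1) ⟨1, by simp⟩
  simpa [B.norm_one] using this

/-- Auxiliary: Banach limit is bounded by a uniform bound. -/
lemma BanachLimit.abs_le' (B : BanachLimit) (x : ℕ → ℝ) (C : ℝ) (hx : ∀ n, |x n| ≤ C) :
    |B.toFun x| ≤ C := by
  have hbdd : IsBddSeq x := ⟨C, hx⟩
  have hCbdd : IsBddSeq (fun _ => C) := ⟨|C|, fun _ => le_abs_self |C| |>.trans_eq (abs_abs C)⟩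
  have hneg : IsBddSeq (fun n => (-1) * x n) := ⟨C, fun n => by simpa using hx n⟩
  have h1 : 0 ≤ B.toFun (fun n => C + x n) := by
    refine B.nonneg _ ⟨|C| + C, fun n => (abs_add_le _ _).trans (by have := hx n; linarith [le_abs_self C])⟩ fun n => ?_
    have := (abs_le.1 (hx n)).1; linarith
  have h2 : 0 ≤ B.toFun (fun n => C + (-1) * x n) := by
    refine B.nonneg _ ⟨|C| + C, fun n => (abs_add_le _ _).trans (by have := hx n; simp only [neg_one_mul, abs_neg]; linarith [le_abs_self C])⟩ fun n => ?_
    have := (abs_le.1 (hx n)).2; linarith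
  rw [B.map_add _ _ hCbdd hbdd, B.const_lim] at h1
  rw [B.map_add _ _ hCbdd hneg, B.const_lim, B.map_smul _ _ hbdd] at h2
  rw [abs_le]; constructor <;> nlinarith

section aux
variable {Ω : Type*} [MeasurableSpace Ω] (P : Measure Ω) [IsProbabilityMeasure P]
  (f : unitInterval → Ω → unitInterval)

lemma Tof_abs_le (g : unitInterval → ℝ) (C : ℝ) (hg : ∀ x, |g x| ≤ C) (x : unitInterval) :
    |Tof P f g x| ≤ C := by
  have := norm_integral_le_of_norm_le_const (μ := P) (f := fun ω => g (f x ω)) (C := C)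
    (Filter.Eventually.of_forall fun ω => by simpa using hg _)
  simpa [Tof, Real.norm_eq_abs, measure_univ] using this

lemma Tof_iter_abs_le (g : unitInterval → ℝ) (C : ℝ) (hg : ∀ x, |g x| ≤ C) :
    ∀ m x, |(Tof P f)^[m] g x| ≤ C := by
  intro m
  induction m with
  | zero => simpa using hg
  | succ n ih =>
    intro x
    rw [Function.iterate_succ_apply']
    exact Tof_abs_le P f _ C ih x

lemma Tof_apply_const (g : unitInterval → ℝ) (x : unitInterval) (y : unitInterval)
    (hy : ∀ ω, f x ω = y) : Tof P f g x = g y := by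
  simp [Tof, hy]

end aux

/-- For `h ∈ 𝓑_a^b` and a medial limit `B`, the function `B_h`
is bounded with `sup |B_h| ≤ ‖h‖`, belongs to `𝓜_a^b` (in particular
`B_h(0) = a`, `B_h(1) = b`) and satisfies `T B_h = B_h`. -/
theorem stmt_2 {Ω : Type*} [MeasurableSpace Ω] (P : Measure Ω) [IsProbabilityMeasure P]
    (f : unitInterval → Ω → unitInterval)
    (hf0 : ∀ ω, f 0 ω = 0) (hf1 : ∀ ω, f 1 ω = 1)
    (𝓑 : Submodule ℝ (unitInterval → ℝ))
    (h𝓑M : ∀ h ∈ 𝓑, MemM f h)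
    (h𝓑T : ∀ h ∈ 𝓑, Tof P f h ∈ 𝓑)
    (a b : ℝ) (h : unitInterval → ℝ)
    (hmem : h ∈ 𝓑) (h0 : h 0 = a) (h1 : h 1 = b)
    (B : BanachLimit) (hB : B.IsMedial P) :
    supNorm (BLof P f B h) ≤ supNorm h ∧
    MemM f (BLof P f B h) ∧
    BLof P f B h 0 = a ∧ BLof P f B h 1 = b ∧
    Tof P f (BLof P f B h) = BLof P f B h := by
  obtain ⟨⟨C, hC⟩, hmeas⟩ := h𝓑M h hmem
  -- iterates stay in 𝓑
  have hiter : ∀ m, (Tof P f)^[m] h ∈ 𝓑 := by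
    intro m; induction m with
    | zero => simpa using hmem
    | succ n ih => rw [Function.iterate_succ_apply']; exact h𝓑T _ ih
  -- pointwise bound on h by supNorm h
  have hbddAbove : BddAbove (Set.range fun x => |h x|) := ⟨C, by rintro _ ⟨x, rfl⟩; exact hC x⟩
  have hle_sup : ∀ x, |h x| ≤ supNorm h := fun x => le_ciSup hbddAbove x
  have hiter_le : ∀ m x, |(Tof P f)^[m] h x| ≤ supNorm h :=
    Tof_iter_abs_le P f h (supNorm h) hle_sup
  have hBL_le : ∀ x, |BLof P f B h x| ≤ supNorm h := by
    intro x
    exact B.abs_le' _ (supNorm h) fun m => hiter_le (m + 1) x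
  -- values at 0 and 1
  have hval : ∀ (y : unitInterval) (c : ℝ), (∀ ω, f y ω = y) → h y = c →
      BLof P f B h y = c := by
    intro y c hfy hyc
    have hiterval : ∀ m, (Tof P f)^[m] h y = c := by
      intro m; induction m with
      | zero => simpa using hyc
      | succ n ih =>
        rw [Function.iterate_succ_apply', Tof_apply_const P f _ y y hfy]; exact ih
    have : BLof P f B h y = B.toFun (fun _ => c) := by
      unfold BLof; congr 1; funext m; exact hiterval (m + 1)
    rw [this, B.const_lim]
  -- the medial property applied at each x
  have hmedial : ∀ x : unitInterval,
      Measurable (fun ω => B.toFun (fun m => (Tof P f)^[m + 1] h (f x ω))) ∧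
      ∫ ω, B.toFun (fun m => (Tof P f)^[m + 1] h (f x ω)) ∂P =
        B.toFun (fun m => ∫ ω, (Tof P f)^[m + 1] h (f x ω) ∂P) := by
    intro x
    exact hB (fun m ω => (Tof P f)^[m + 1] h (f x ω))
      ⟨supNorm h, fun m ω => hiter_le (m + 1) (f x ω)⟩
      (fun m => (h𝓑M _ (hiter (m + 1))).2 x)
  refine ⟨?_, ⟨⟨supNorm h, hBL_le⟩, fun x => (hmedial x).1⟩, hval 0 a hf0 h0, hval 1 b hf1 h1, ?_⟩
  · exact ciSup_le hBL_le
  · funext x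
    have key := (hmedial x).2
    have : Tof P f (BLof P f B h) x =
        B.toFun (fun m => ∫ ω, (Tof P f)^[m + 1] h (f x ω) ∂P) := key
    rw [Tof]
    show (∫ ω, BLof P f B h (f x ω) ∂P) = BLof P f B h x
    rw [show (fun ω => BLof P f B h (f x ω)) =
        (fun ω => B.toFun (fun m => (Tof P f)^[m + 1] h (f x ω))) from rfl, key]
    have hstep : (fun m => ∫ ω, (Tof P f)^[m + 1] h (f x ω) ∂P) =
        (fun m => (Tof P f)^[m + 1 + 1] h x) := by
      funext m
      rw [Function.iterate_succ_apply' (Tof P f) (m + 1) h]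
      rfl
    rw [hstep]
    exact B.shift (fun m => (Tof P f)^[m + 1] h x)
      ⟨supNorm h, fun m => hiter_le (m + 1) x⟩
end
end

section
/- Let a,b ∈ ℝ and let B be a medial limit with respect to (Ω,𝒜,P) under which the class 𝓑_a^b is closed. Then sol_a^b(E_0) = {B_h : h ∈ 𝓑_a^b}. -/
open MeasureTheory unitInterval

noncomputable section

lemma Tof_bound {Ω : Type*} [MeasurableSpace Ω] (P : Measure Ω) [IsProbabilityMeasure P]
    (f : unitInterval → Ω → unitInterval) (g : unitInterval → ℝ) (C : ℝ)
    (hg : ∀ x, |g x| ≤ C) : ∀ x, |Tof P f g x| ≤ C := by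
  intro x
  have := norm_integral_le_of_norm_le_const (μ := P) (f := fun ω => g (f x ω)) (C := C)
    (Filter.Eventually.of_forall fun ω => by simpa using hg (f x ω))
  simpa [Tof, Real.norm_eq_abs] using this

/-- If `𝓑_a^b` is closed under a medial limit `B`, then
`sol_a^b(E_0) = {B_h : h ∈ 𝓑_a^b}`. -/
theorem stmt_4 {Ω : Type*} [MeasurableSpace Ω] (P : Measure Ω) [IsProbabilityMeasure P]
    (f : unitInterval → Ω → unitInterval)
    (hf0 : ∀ ω, f 0 ω = 0) (hf1 : ∀ ω, f 1 ω = 1)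
    (𝓑 : Submodule ℝ (unitInterval → ℝ))
    (h𝓑M : ∀ h ∈ 𝓑, MemM f h)
    (h𝓑T : ∀ h ∈ 𝓑, Tof P f h ∈ 𝓑)
    (a b : ℝ) (B : BanachLimit) (hB : B.IsMedial P)
    (hclosed : ClosedUnder P f 𝓑 a b B) :
    {Φ : unitInterval → ℝ | Φ ∈ 𝓑 ∧ Φ 0 = a ∧ Φ 1 = b ∧ SatEq P f (fun _ => 0) Φ} =
      {ψ : unitInterval → ℝ | ∃ h ∈ 𝓑, h 0 = a ∧ h 1 = b ∧ ψ = BLof P f B h} := by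
  have Bconst : ∀ c : ℝ, B.toFun (fun _ => c) = c := by
    intro c
    have h1 : IsBddSeq (fun _ : ℕ => (1:ℝ)) := ⟨1, fun n => by norm_num⟩
    have := B.map_smul c (fun _ => 1) h1
    simpa [B.norm_one] using this
  ext Φ
  simp only [Set.mem_setOf_eq]
  constructor
  · rintro ⟨hmem, h0, h1, hsat⟩
    obtain ⟨hmeas, heq⟩ := hsat
    refine ⟨Φ, hmem, h0, h1, ?_⟩
    have hT : Tof P f Φ = Φ := by
      funext x
      have := heq x
      simp only [add_zero] at this
      simp [Tof, ← this]
    have hiter : ∀ m, (Tof P f)^[m] Φ = Φ := by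
      intro m; induction m with
      | zero => rfl
      | succ n ih => rw [Function.iterate_succ_apply, hT, ih]
    funext x
    simp [BLof, hiter, Bconst]
  · rintro ⟨h, hmem, h0, h1, rfl⟩
    obtain ⟨hBmem, hB0, hB1⟩ := hclosed h hmem h0 h1
    obtain ⟨⟨C, hC⟩, -⟩ := h𝓑M h hmem
    have iterMem : ∀ m, (Tof P f)^[m] h ∈ 𝓑 := by
      intro m; induction m with
      | zero => exact hmem
      | succ n ih => rw [Function.iterate_succ_apply']; exact h𝓑T _ ih
    have iterBdd : ∀ m x, |(Tof P f)^[m] h x| ≤ C := by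
      intro m; induction m with
      | zero => exact hC
      | succ n ih =>
        intro x
        rw [Function.iterate_succ_apply']
        exact Tof_bound P f _ C ih x
    refine ⟨hBmem, hB0, hB1, ?_, ?_⟩
    · intro x
      exact (hB (fun m ω => (Tof P f)^[m+1] h (f x ω))
        ⟨C, fun m ω => iterBdd (m+1) (f x ω)⟩
        (fun m => (h𝓑M _ (iterMem (m+1))).2 x)).1
    · intro x
      have key := (hB (fun m ω => (Tof P f)^[m+1] h (f x ω))
        ⟨C, fun m ω => iterBdd (m+1) (f x ω)⟩
        (fun m => (h𝓑M _ (iterMem (m+1))).2 x)).2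
      have hshift : B.toFun (fun m => (Tof P f)^[m+2] h x)
          = B.toFun (fun m => (Tof P f)^[m+1] h x) := by
        have := B.shift (fun m => (Tof P f)^[m+1] h x)
          ⟨C, fun m => iterBdd (m+1) x⟩
        simpa using this
      have hint : ∀ m : ℕ, ∫ ω, (Tof P f)^[m+1] h (f x ω) ∂P = (Tof P f)^[m+2] h x := by
        intro m
        rw [show (Tof P f)^[m+2] h = Tof P f ((Tof P f)^[m+1] h) from
          Function.iterate_succ_apply' _ _ _]
        rfl
      show BLof P f B h x = _
      calc B.toFun (fun m => (Tof P f)^[m+1] h x)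
          = B.toFun (fun m => (Tof P f)^[m+2] h x) := hshift.symm
        _ = B.toFun (fun m => ∫ ω, (Tof P f)^[m+1] h (f x ω) ∂P) := by
            simp only [hint]
        _ = ∫ ω, B.toFun (fun m => (Tof P f)^[m+1] h (f x ω)) ∂P := key.symm
        _ = (∫ ω, BLof P f B h (f x ω) ∂P) + (fun _ => (0:ℝ)) x := by
            simp [BLof]
end
end

section
/- Let a,b ∈ ℝ and let g : [0,1] → ℝ be bounded. If φ ∈ 𝓑_a^b satisfies equation (E_g), then for every k ≥ 1 we have g_k ∈ 𝓑_0^0 and ‖g_k‖ ≤ 2‖φ‖; in particular 𝒢 is a bounded subset of 𝓑_0^0. -/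
open MeasureTheory unitInterval

noncomputable section

/-- If `φ ∈ 𝓑_a^b` satisfies (E_g), then for every `k ≥ 1` we have
`g_k ∈ 𝓑_0^0` and `‖g_k‖ ≤ 2‖φ‖`; in particular `𝒢` is a bounded subset of
`𝓑_0^0`. -/
theorem stmt_5 {Ω : Type*} [MeasurableSpace Ω] (P : Measure Ω) [IsProbabilityMeasure P]
    (f : unitInterval → Ω → unitInterval)
    (hf0 : ∀ ω, f 0 ω = 0) (hf1 : ∀ ω, f 1 ω = 1)
    (𝓑 : Submodule ℝ (unitInterval → ℝ))
    (h𝓑M : ∀ h ∈ 𝓑, MemM f h)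
    (h𝓑T : ∀ h ∈ 𝓑, Tof P f h ∈ 𝓑)
    (a b : ℝ) (g : unitInterval → ℝ) (hg : ∃ C : ℝ, ∀ x, |g x| ≤ C)
    (φ : unitInterval → ℝ) (hφ : φ ∈ 𝓑) (hφ0 : φ 0 = a) (hφ1 : φ 1 = b)
    (hE : SatEq P f g φ) :
    (∀ k : ℕ, 1 ≤ k →
      gk P f g k ∈ 𝓑 ∧ gk P f g k 0 = 0 ∧ gk P f g k 1 = 0 ∧
        supNorm (gk P f g k) ≤ 2 * supNorm φ) ∧
    GBdd P f g := by

  -- basic facts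
  have huniv : (P Set.univ).toReal = 1 := by simp
  have hint : ∀ h ∈ 𝓑, ∀ x, Integrable (fun ω => h (f x ω)) P := by
    intro h hh x
    obtain ⟨⟨C, hC⟩, hmeas⟩ := h𝓑M h hh
    exact (integrable_const C).mono' ((hmeas x).aestronglyMeasurable)
      (Filter.Eventually.of_forall fun ω => by
        simpa [Real.norm_eq_abs] using hC (f x ω))
  have hTiter : ∀ k, (Tof P f)^[k] φ ∈ 𝓑 := by
    intro k
    induction k with
    | zero => simpa using hφ
    | succ n ih => rw [Function.iterate_succ_apply']; exact h𝓑T _ ih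
  -- key identity : T^l g = T^l φ - T^(l+1) φ
  have hkey : ∀ l : ℕ, (Tof P f)^[l] g =
      fun x => (Tof P f)^[l] φ x - (Tof P f)^[l + 1] φ x := by
    intro l
    induction l with
    | zero =>
      funext x
      have := hE.2 x
      simp only [Function.iterate_zero, id_eq, zero_add, Function.iterate_one]
      have hT : Tof P f φ x = ∫ ω, φ (f x ω) ∂P := rfl
      rw [hT]; linarith
    | succ n ih =>
      funext x
      rw [Function.iterate_succ_apply', ih]
      have h1 := hint _ (hTiter n) x
      have h2 := hint _ (hTiter (n + 1)) x
      have : Tof P f (fun y => (Tof P f)^[n] φ y - (Tof P f)^[n + 1] φ y) x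
          = (∫ ω, (Tof P f)^[n] φ (f x ω) ∂P) - ∫ ω, (Tof P f)^[n + 1] φ (f x ω) ∂P := by
        simpa [Tof] using integral_sub h1 h2
      rw [this]
      have hA : (∫ ω, (Tof P f)^[n] φ (f x ω) ∂P) = (Tof P f)^[n + 1] φ x := by
        rw [Function.iterate_succ_apply']; rfl
      have hB : (∫ ω, (Tof P f)^[n + 1] φ (f x ω) ∂P) = (Tof P f)^[n + 1 + 1] φ x := by
        conv_rhs => rw [Function.iterate_succ_apply']
        rfl
      rw [hA, hB]
  -- telescoping : g_k = φ - T^k φ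
  have hgk : ∀ k : ℕ, gk P f g k = fun x => φ x - (Tof P f)^[k] φ x := by
    intro k
    funext x
    have : gk P f g k x = ∑ l ∈ Finset.range k,
        ((Tof P f)^[l] φ x - (Tof P f)^[l + 1] φ x) := by
      unfold gk
      exact Finset.sum_congr rfl fun l _ => by rw [hkey l]
    rw [this, Finset.sum_range_sub' (fun l => (Tof P f)^[l] φ x)]
    simp
  -- endpoint values
  have hT0 : ∀ h : unitInterval → ℝ, Tof P f h 0 = h 0 := by
    intro h
    have : (fun ω => h (f 0 ω)) = fun _ => h 0 := funext fun ω => by rw [hf0 ω]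
    simp [Tof, this]
  have hT1 : ∀ h : unitInterval → ℝ, Tof P f h 1 = h 1 := by
    intro h
    have : (fun ω => h (f 1 ω)) = fun _ => h 1 := funext fun ω => by rw [hf1 ω]
    simp [Tof, this]
  have hiter0 : ∀ k, (Tof P f)^[k] φ 0 = a := by
    intro k
    induction k with
    | zero => simpa using hφ0
    | succ n ih => rw [Function.iterate_succ_apply', hT0]; exact ih
  have hiter1 : ∀ k, (Tof P f)^[k] φ 1 = b := by
    intro k
    induction k with
    | zero => simpa using hφ1
    | succ n ih => rw [Function.iterate_succ_apply', hT1]; exact ih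
  -- sup norm facts
  obtain ⟨Cφ, hCφ⟩ := (h𝓑M φ hφ).1
  have hbdd : BddAbove (Set.range fun x => |φ x|) := ⟨Cφ, by rintro _ ⟨x, rfl⟩; exact hCφ x⟩
  have hle : ∀ x, |φ x| ≤ supNorm φ := fun x => le_ciSup hbdd x
  have hTnorm : ∀ k x, |(Tof P f)^[k] φ x| ≤ supNorm φ := by
    intro k
    induction k with
    | zero => simpa using hle
    | succ n ih =>
      intro x
      rw [Function.iterate_succ_apply']
      have : ‖∫ ω, (Tof P f)^[n] φ (f x ω) ∂P‖ ≤ supNorm φ * (P Set.univ).toReal :=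
        norm_integral_le_of_norm_le_const (Filter.Eventually.of_forall fun ω => by
          simpa [Real.norm_eq_abs] using ih (f x ω))
      rw [huniv, mul_one] at this
      simpa [Tof, Real.norm_eq_abs] using this
  have hptbd : ∀ k x, |gk P f g k x| ≤ 2 * supNorm φ := by
    intro k x
    rw [hgk k]
    calc |φ x - (Tof P f)^[k] φ x| ≤ |φ x| + |(Tof P f)^[k] φ x| := abs_sub _ _
    _ ≤ supNorm φ + supNorm φ := add_le_add (hle x) (hTnorm k x)
    _ = 2 * supNorm φ := by ring
  refine ⟨fun k _ => ⟨?_, ?_, ?_, ?_⟩, ⟨2 * supNorm φ, fun k _ x => hptbd k x⟩⟩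
  · have : gk P f g k = φ - (Tof P f)^[k] φ := by
      rw [hgk k]; rfl
    rw [this]
    exact Submodule.sub_mem _ hφ (hTiter k)
  · rw [hgk k]; simp [hiter0 k, hφ0]
  · rw [hgk k]; simp [hiter1 k, hφ1]
  · exact ciSup_le fun x => hptbd k x
end
end

section
/- Let a,b ∈ ℝ and let g : [0,1] → ℝ be bounded. If there exists φ ∈ 𝓑_a^b satisfying equation (E_g), then for every Banach limit B, every k ≥ 1 and every x ∈ [0,1] one has B_{g_k}(x) = B((T^m g_k(x))_{m≥1}) = 0. -/
open MeasureTheory unitInterval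

noncomputable section

section Aux

variable {Ω : Type*} [MeasurableSpace Ω] (P : Measure Ω) [IsProbabilityMeasure P]
  (f : unitInterval → Ω → unitInterval)

lemma memM_integrable {h : unitInterval → ℝ} (hm : MemM f h) (x : unitInterval) :
    Integrable (fun ω => h (f x ω)) P := by
  obtain ⟨C, hC⟩ := hm.1
  exact (integrable_const C).mono' (hm.2 x).aestronglyMeasurable
    (Filter.Eventually.of_forall fun ω => by simpa using hC (f x ω))

lemma tof_sub {h1 h2 : unitInterval → ℝ} (hm1 : MemM f h1) (hm2 : MemM f h2) :
    Tof P f (fun y => h1 y - h2 y) = fun x => Tof P f h1 x - Tof P f h2 x := by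
  funext x
  simpa [Tof] using integral_sub (memM_integrable P f hm1 x) (memM_integrable P f hm2 x)

lemma tof_bound {h : unitInterval → ℝ} {C : ℝ}
    (hC : ∀ x, |h x| ≤ C) (x : unitInterval) : |Tof P f h x| ≤ C := by
  have := norm_integral_le_of_norm_le_const (μ := P) (f := fun ω => h (f x ω)) (C := C)
    (Filter.Eventually.of_forall fun ω => by simpa using hC (f x ω))
  simpa [Tof] using this

end Aux

/-- If there exists `φ ∈ 𝓑_a^b` satisfying (E_g), then for every
Banach limit `B`, every `k ≥ 1` and every `x`, `B_{g_k}(x) = 0`. -/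
theorem stmt_6 {Ω : Type*} [MeasurableSpace Ω] (P : Measure Ω) [IsProbabilityMeasure P]
    (f : unitInterval → Ω → unitInterval)
    (hf0 : ∀ ω, f 0 ω = 0) (hf1 : ∀ ω, f 1 ω = 1)
    (𝓑 : Submodule ℝ (unitInterval → ℝ))
    (h𝓑M : ∀ h ∈ 𝓑, MemM f h)
    (h𝓑T : ∀ h ∈ 𝓑, Tof P f h ∈ 𝓑)
    (a b : ℝ) (g : unitInterval → ℝ) (hg : ∃ C : ℝ, ∀ x, |g x| ≤ C)
    (hex : ∃ φ : unitInterval → ℝ, φ ∈ 𝓑 ∧ φ 0 = a ∧ φ 1 = b ∧ SatEq P f g φ) :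
    ∀ B : BanachLimit, ∀ k : ℕ, 1 ≤ k → ∀ x,
      BLof P f B (gk P f g k) x = 0 := by
  intro B k hk x
  obtain ⟨φ, hφB, -, -, hmeas, heq⟩ := hex
  -- iterates of T stay in 𝓑
  have mem_iter : ∀ l, (Tof P f)^[l] φ ∈ 𝓑 := by
    intro l
    induction l with
    | zero => simpa using hφB
    | succ l ih => rw [Function.iterate_succ_apply']; exact h𝓑T _ ih
  have hg' : g = fun x => φ x - Tof P f φ x := by
    funext y
    have := heq y
    simp only [Tof]
    linarith
  -- T^[n] of a difference of 𝓑-elements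
  have iter_sub : ∀ (n : ℕ) (h1 h2 : unitInterval → ℝ), h1 ∈ 𝓑 → h2 ∈ 𝓑 →
      (Tof P f)^[n] (fun y => h1 y - h2 y) =
        fun y => (Tof P f)^[n] h1 y - (Tof P f)^[n] h2 y := by
    intro n
    induction n with
    | zero => intro h1 h2 _ _; rfl
    | succ n ih =>
      intro h1 h2 m1 m2
      rw [Function.iterate_succ_apply, Function.iterate_succ_apply,
        Function.iterate_succ_apply, tof_sub P f (h𝓑M _ m1) (h𝓑M _ m2)]
      exact ih _ _ (h𝓑T _ m1) (h𝓑T _ m2)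
  -- gk telescopes
  have hgk : gk P f g k = fun y => φ y - (Tof P f)^[k] φ y := by
    funext y
    simp only [gk]
    have hl : ∀ l, (Tof P f)^[l] g y = (Tof P f)^[l] φ y - (Tof P f)^[l+1] φ y := by
      intro l
      rw [hg', iter_sub l φ (Tof P f φ) hφB (h𝓑T _ hφB)]
      simp [Function.iterate_succ_apply]
    rw [Finset.sum_congr rfl (fun l _ => hl l)]
    simpa using Finset.sum_range_sub' (fun l => (Tof P f)^[l] φ y) k
  have hiter_gk : ∀ m, (Tof P f)^[m] (gk P f g k) x =
      (Tof P f)^[m] φ x - (Tof P f)^[m + k] φ x := by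
    intro m
    rw [hgk, iter_sub m φ ((Tof P f)^[k] φ) hφB (mem_iter k), Function.iterate_add_apply]
  -- boundedness of the iterates
  obtain ⟨C, hC⟩ := (h𝓑M φ hφB).1
  have hsb : ∀ m y, |(Tof P f)^[m] φ y| ≤ C := by
    intro m
    induction m with
    | zero => simpa using hC
    | succ m ih =>
      intro y
      rw [Function.iterate_succ_apply']
      exact tof_bound P f ih y
  set s : ℕ → ℝ := fun m => (Tof P f)^[m] φ x with hs_def
  have hs_bdd : IsBddSeq s := ⟨C, fun m => hsb m x⟩
  -- Banach limit facts
  have bdd_shift : ∀ (u : ℕ → ℝ), IsBddSeq u → ∀ j : ℕ, IsBddSeq (fun n => u (n + j)) := by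
    rintro u ⟨D, hD⟩ j; exact ⟨D, fun n => hD _⟩
  have bl_shift : ∀ (u : ℕ → ℝ), IsBddSeq u → ∀ j : ℕ,
      B.toFun (fun n => u (n + j)) = B.toFun u := by
    intro u hu j
    induction j with
    | zero => simp
    | succ j ih =>
      have he : (fun n => u (n + (j + 1))) = fun n => (fun n => u (n + j)) (n + 1) := by
        funext n; congr 1; omega
      rw [he, B.shift _ (bdd_shift u hu j), ih]
  have bl_sub : ∀ (u v : ℕ → ℝ), IsBddSeq u → IsBddSeq v →
      B.toFun (fun n => u n - v n) = B.toFun u - B.toFun v := by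
    intro u v hu hv
    obtain ⟨D, hD⟩ := hv
    have hv' : IsBddSeq (fun n => (-1 : ℝ) * v n) := ⟨D, fun n => by simpa using hD n⟩
    have he : (fun n => u n - v n) = fun n => u n + (-1 : ℝ) * v n := by
      funext n; ring
    rw [he, B.map_add u _ hu hv', B.map_smul (-1) v ⟨D, hD⟩]
    ring
  -- conclude
  have hBL : BLof P f B (gk P f g k) x =
      B.toFun (fun m => s (m + 1) - s ((m + 1) + k)) := by
    simp only [BLof]
    congr 1
    funext m
    exact hiter_gk (m + 1)
  rw [hBL]
  have ht_bdd : IsBddSeq (fun m => s (m + 1)) := bdd_shift s hs_bdd 1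
  have he2 : (fun m => s ((m + 1) + k)) = fun m => (fun m => s (m + 1)) (m + k) := by
    funext m; congr 1; omega
  rw [bl_sub _ _ ht_bdd (by rw [he2]; exact bdd_shift _ ht_bdd k), he2,
    bl_shift _ ht_bdd k]
  ring
end
end

section
/- Assume g ∈ 𝓑_0^0 and that 𝒢 is bounded in the supremum norm. If B is a medial limit with respect to (Ω,𝒜,P), then B_* ∈ 𝓜_0^0 (in particular B_* is bounded with B_*(0) = B_*(1) = 0) and B_* = T B_* + g. -/
open MeasureTheory unitInterval

noncomputable section

namespace BanachLimit

lemma const' (B : BanachLimit) (c : ℝ) : B.toFun (fun _ => c) = c := by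
  have h := B.map_smul c (fun _ => 1) ⟨1, fun n => by simp⟩
  simpa [B.norm_one] using h

lemma sub_const' (B : BanachLimit) {x : ℕ → ℝ} (hx : IsBddSeq x) (c : ℝ) :
    B.toFun (fun n => x n - c) = B.toFun x - c := by
  have h := B.map_add x (fun _ => -c) hx ⟨|c|, fun n => by simp⟩
  have hc := B.const' (-c)
  rw [hc] at h
  simpa [sub_eq_add_neg] using h

lemma abs_le'_s7 (B : BanachLimit) {x : ℕ → ℝ} {C : ℝ} (hx : ∀ n, |x n| ≤ C) :
    |B.toFun x| ≤ C := by
  have hbx : IsBddSeq x := ⟨C, hx⟩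
  have hnx : IsBddSeq (fun n => (-1 : ℝ) * x n) := ⟨C, fun n => by simpa using hx n⟩
  have h1 : 0 ≤ B.toFun (fun n => C + x n) :=
    B.nonneg _ ⟨C + C, fun n => by
      have := abs_le.mp (hx n); rw [abs_le]; dsimp only; constructor <;> linarith⟩
      (fun n => by have := (abs_le.mp (hx n)).1; linarith)
  have h2 : 0 ≤ B.toFun (fun n => C + (-1 : ℝ) * x n) :=
    B.nonneg _ ⟨C + C, fun n => by
      have := abs_le.mp (hx n); rw [abs_le]; dsimp only; constructor <;> linarith⟩
      (fun n => by have := (abs_le.mp (hx n)).2; linarith)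
  have e1 : B.toFun (fun n => C + x n) = C + B.toFun x := by
    rw [B.map_add (fun _ => C) x ⟨|C|, fun _ => le_refl _⟩ hbx, B.const']
  have e2 : B.toFun (fun n => C + (-1 : ℝ) * x n) = C + (-1) * B.toFun x := by
    rw [B.map_add (fun _ => C) (fun n => (-1 : ℝ) * x n) ⟨|C|, fun _ => le_refl _⟩ hnx,
      B.const', B.map_smul (-1) x hbx]
  rw [e1] at h1; rw [e2] at h2
  rw [abs_le]; constructor <;> linarith

end BanachLimit

/-- If `g ∈ 𝓑_0^0`, `𝒢` is bounded in the supremum norm and `B` is a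
medial limit, then `B_* ∈ 𝓜_0^0` (in particular `B_*` is bounded with
`B_*(0) = B_*(1) = 0`) and `B_* = T B_* + g`. -/
theorem stmt_7 {Ω : Type*} [MeasurableSpace Ω] (P : Measure Ω) [IsProbabilityMeasure P]
    (f : unitInterval → Ω → unitInterval)
    (hf0 : ∀ ω, f 0 ω = 0) (hf1 : ∀ ω, f 1 ω = 1)
    (𝓑 : Submodule ℝ (unitInterval → ℝ))
    (h𝓑M : ∀ h ∈ 𝓑, MemM f h)
    (h𝓑T : ∀ h ∈ 𝓑, Tof P f h ∈ 𝓑)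
    (g : unitInterval → ℝ) (hg : g ∈ 𝓑) (hg0 : g 0 = 0) (hg1 : g 1 = 0)
    (hG : GBdd P f g)
    (B : BanachLimit) (hB : B.IsMedial P) :
    MemM f (BStar P f B g) ∧
    BStar P f B g 0 = 0 ∧ BStar P f B g 1 = 0 ∧
    ∀ x, BStar P f B g x = Tof P f (BStar P f B g) x + g x := by
  classical
  obtain ⟨C, hC⟩ := hG
  have hmem : ∀ l : ℕ, (Tof P f)^[l] g ∈ 𝓑 := by
    intro l; induction l with
    | zero => simpa using hg
    | succ l ih => rw [Function.iterate_succ_apply']; exact h𝓑T _ ih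
  have hMl : ∀ l, MemM f ((Tof P f)^[l] g) := fun l => h𝓑M _ (hmem l)
  have hT0 : ∀ l : ℕ, (Tof P f)^[l] g 0 = 0 := by
    intro l; induction l with
    | zero => simpa using hg0
    | succ l ih => rw [Function.iterate_succ_apply']; simp [Tof, hf0, ih]
  have hT1 : ∀ l : ℕ, (Tof P f)^[l] g 1 = 0 := by
    intro l; induction l with
    | zero => simpa using hg1
    | succ l ih => rw [Function.iterate_succ_apply']; simp [Tof, hf1, ih]
  have hCk : ∀ (k : ℕ) (x), |gk P f g (k + 1) x| ≤ C :=
    fun k x => hC (k + 1) (Nat.le_add_left 1 k) x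
  have hmeas_gk : ∀ (k : ℕ) (x : unitInterval), Measurable fun ω => gk P f g k (f x ω) := by
    intro k x
    exact Finset.measurable_sum _ fun l _ => (hMl l).2 x
  have hmed : ∀ x : unitInterval,
      Measurable (fun ω => B.toFun fun m => gk P f g (m + 1) (f x ω)) ∧
      ∫ ω, B.toFun (fun m => gk P f g (m + 1) (f x ω)) ∂P
        = B.toFun (fun m => ∫ ω, gk P f g (m + 1) (f x ω) ∂P) := fun x =>
    hB (fun m ω => gk P f g (m + 1) (f x ω)) ⟨C, fun m ω => hCk m _⟩
      (fun m => hmeas_gk (m + 1) x)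
  have hBbdd : ∀ x, |BStar P f B g x| ≤ C := fun x => B.abs_le'_s7 (fun k => hCk k x)
  have hint : ∀ (l : ℕ) (x : unitInterval),
      Integrable (fun ω => (Tof P f)^[l] g (f x ω)) P := by
    intro l x
    obtain ⟨Cl, hCl⟩ := (hMl l).1
    exact (integrable_const Cl).mono' ((hMl l).2 x).aestronglyMeasurable
      (ae_of_all _ fun ω => by simpa using hCl (f x ω))
  have hTgk : ∀ (m : ℕ) (x : unitInterval),
      ∫ ω, gk P f g (m + 1) (f x ω) ∂P = gk P f g (m + 2) x - g x := by
    intro m x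
    have h1 : ∫ ω, gk P f g (m + 1) (f x ω) ∂P
        = ∑ l ∈ Finset.range (m + 1), ∫ ω, (Tof P f)^[l] g (f x ω) ∂P := by
      rw [show (fun ω => gk P f g (m + 1) (f x ω))
          = fun ω => ∑ l ∈ Finset.range (m + 1), (Tof P f)^[l] g (f x ω) from rfl]
      exact integral_finset_sum _ fun l _ => hint l x
    have h2 : ∀ l : ℕ, ∫ ω, (Tof P f)^[l] g (f x ω) ∂P = (Tof P f)^[l + 1] g x := by
      intro l; rw [Function.iterate_succ_apply']; rfl
    have hgk2 : (∑ l ∈ Finset.range (m + 2), (Tof P f)^[l] g x)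
        = (∑ l ∈ Finset.range (m + 1), (Tof P f)^[l + 1] g x) + g x := by
      simpa using Finset.sum_range_succ' (fun l => (Tof P f)^[l] g x) (m + 1)
    rw [h1]
    simp only [h2]
    rw [show gk P f g (m + 2) x = ∑ l ∈ Finset.range (m + 2), (Tof P f)^[l] g x from rfl,
      hgk2]
    ring
  have hB0 : BStar P f B g 0 = 0 := by
    have h : (fun k => gk P f g (k + 1) (0 : unitInterval)) = fun _ => (0 : ℝ) := by
      funext k; simp [gk, hT0]
    show B.toFun (fun k => gk P f g (k + 1) 0) = 0
    rw [h]; exact B.const' 0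
  have hB1 : BStar P f B g 1 = 0 := by
    have h : (fun k => gk P f g (k + 1) (1 : unitInterval)) = fun _ => (0 : ℝ) := by
      funext k; simp [gk, hT1]
    show B.toFun (fun k => gk P f g (k + 1) 1) = 0
    rw [h]; exact B.const' 0
  have heq : ∀ x, BStar P f B g x = Tof P f (BStar P f B g) x + g x := by
    intro x
    have hTB : Tof P f (BStar P f B g) x = B.toFun (fun m => gk P f g (m + 2) x - g x) := by
      calc Tof P f (BStar P f B g) x
          = ∫ ω, B.toFun (fun m => gk P f g (m + 1) (f x ω)) ∂P := rfl
        _ = B.toFun (fun m => ∫ ω, gk P f g (m + 1) (f x ω) ∂P) := (hmed x).2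
        _ = B.toFun (fun m => gk P f g (m + 2) x - g x) := by
            congr 1; funext m; exact hTgk m x
    have hbdd2 : IsBddSeq (fun m => gk P f g (m + 2) x) :=
      ⟨C, fun m => hC (m + 2) (by omega) x⟩
    have hsub : B.toFun (fun m => gk P f g (m + 2) x - g x)
        = B.toFun (fun m => gk P f g (m + 2) x) - g x := B.sub_const' hbdd2 (g x)
    have hshift : B.toFun (fun m => gk P f g (m + 2) x)
        = B.toFun (fun m => gk P f g (m + 1) x) :=
      B.shift (fun m => gk P f g (m + 1) x) ⟨C, fun m => hCk m x⟩
    rw [hTB, hsub, hshift]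
    show BStar P f B g x = BStar P f B g x - g x + g x
    ring
  exact ⟨⟨⟨C, hBbdd⟩, fun x => (hmed x).1⟩, hB0, hB1, heq⟩
end
end

section
/- Let a,b ∈ ℝ and let g : [0,1] → ℝ be bounded. Assume sol_a^b(E_g) ≠ ∅. Then g is admissible for every Banach limit B under which the class 𝓑_a^b is closed (i.e., for every such B, 𝒢 is bounded in the supremum norm and B_* ∈ 𝓑_0^0). -/
open MeasureTheory unitInterval

noncomputable section

/-- If `sol_a^b(E_g) ≠ ∅`, then `g` is admissible for every Banach
limit `B` under which `𝓑_a^b` is closed, i.e. `𝒢` is bounded in the supremum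
norm and `B_* ∈ 𝓑_0^0`. -/
theorem stmt_9 {Ω : Type*} [MeasurableSpace Ω] (P : Measure Ω) [IsProbabilityMeasure P]
    (f : unitInterval → Ω → unitInterval)
    (hf0 : ∀ ω, f 0 ω = 0) (hf1 : ∀ ω, f 1 ω = 1)
    (𝓑 : Submodule ℝ (unitInterval → ℝ))
    (h𝓑M : ∀ h ∈ 𝓑, MemM f h)
    (h𝓑T : ∀ h ∈ 𝓑, Tof P f h ∈ 𝓑)
    (a b : ℝ) (g : unitInterval → ℝ) (hg : ∃ C : ℝ, ∀ x, |g x| ≤ C)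
    (hne : ∃ φ : unitInterval → ℝ, φ ∈ 𝓑 ∧ φ 0 = a ∧ φ 1 = b ∧ SatEq P f g φ) :
    ∀ B : BanachLimit, ClosedUnder P f 𝓑 a b B →
      GBdd P f g ∧ BStar P f B g ∈ 𝓑 ∧
        BStar P f B g 0 = 0 ∧ BStar P f B g 1 = 0 := by
  obtain ⟨φ, hφB, hφ0, hφ1, hφmeas, hφeq⟩ := hne
  intro B hB
  -- g = φ - Tφ
  have hgeq : g = φ - Tof P f φ := by
    funext x
    have := hφeq x
    simp only [Pi.sub_apply, Tof]
    linarith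
  have hTφB : Tof P f φ ∈ 𝓑 := h𝓑T φ hφB
  have hgB : g ∈ 𝓑 := hgeq ▸ Submodule.sub_mem _ hφB hTφB
  -- integrability of compositions for members of 𝓑
  have hint : ∀ h ∈ 𝓑, ∀ x, Integrable (fun ω => h (f x ω)) P := by
    intro h hh x
    obtain ⟨⟨C, hC⟩, hm⟩ := h𝓑M h hh
    exact Integrable.mono' (integrable_const C) (hm x).aestronglyMeasurable
      (Filter.Eventually.of_forall fun ω => by
        simpa [Real.norm_eq_abs] using hC (f x ω))
  -- T is subtractive on 𝓑
  have hTsub : ∀ h1 ∈ 𝓑, ∀ h2 ∈ 𝓑,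
      Tof P f (h1 - h2) = Tof P f h1 - Tof P f h2 := by
    intro h1 hh1 h2 hh2
    funext x
    simp only [Tof, Pi.sub_apply]
    exact integral_sub (hint h1 hh1 x) (hint h2 hh2 x)
  -- iterates stay in 𝓑
  have hiterB : ∀ (h : unitInterval → ℝ), h ∈ 𝓑 → ∀ l, (Tof P f)^[l] h ∈ 𝓑 := by
    intro h hh l
    induction l with
    | zero => simpa using hh
    | succ n ih => rw [Function.iterate_succ_apply']; exact h𝓑T _ ih
  -- T preserves bounds
  have hTbd : ∀ (h : unitInterval → ℝ) (C : ℝ), (∀ x, |h x| ≤ C) →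
      ∀ x, |Tof P f h x| ≤ C := by
    intro h C hC x
    have := norm_integral_le_of_norm_le_const (μ := P) (f := fun ω => h (f x ω)) (C := C)
      (Filter.Eventually.of_forall fun ω => by
        simpa [Real.norm_eq_abs] using hC (f x ω))
    simpa [Tof, Real.norm_eq_abs, measure_univ] using this
  obtain ⟨Cφ, hCφ⟩ := (h𝓑M φ hφB).1
  have hiterbd : ∀ l x, |(Tof P f)^[l] φ x| ≤ Cφ := by
    intro l
    induction l with
    | zero => simpa using hCφ
    | succ n ih =>
      intro x
      rw [Function.iterate_succ_apply']
      exact hTbd _ Cφ ih x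
  -- telescoping identity
  have hiter_eq : ∀ l, (Tof P f)^[l] g =
      (Tof P f)^[l] φ - (Tof P f)^[l + 1] φ := by
    intro l
    induction l with
    | zero => simpa using hgeq
    | succ n ih =>
      rw [Function.iterate_succ_apply' (Tof P f) n g, ih,
        hTsub _ (hiterB φ hφB n) _ (hiterB φ hφB (n + 1)),
        Function.iterate_succ_apply' (Tof P f) n φ,
        Function.iterate_succ_apply' (Tof P f) (n + 1) φ,
        Function.iterate_succ_apply' (Tof P f) n φ]
  have hgk : ∀ k x, gk P f g k x = φ x - (Tof P f)^[k] φ x := by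
    intro k x
    have : ∀ l ∈ Finset.range k, (Tof P f)^[l] g x =
        (Tof P f)^[l] φ x - (Tof P f)^[l + 1] φ x := by
      intro l _
      rw [hiter_eq l, Pi.sub_apply]
    rw [gk, Finset.sum_congr rfl this, Finset.sum_range_sub']
    simp
  -- boundedness of 𝒢
  have hGbdd : GBdd P f g := by
    refine ⟨2 * Cφ, fun k _ x => ?_⟩
    rw [hgk]
    calc |φ x - (Tof P f)^[k] φ x| ≤ |φ x| + |(Tof P f)^[k] φ x| := abs_sub _ _
      _ ≤ 2 * Cφ := by have := hCφ x; have := hiterbd k x; linarith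
  -- B_* = φ - B_φ
  have hbdd1 : ∀ x, IsBddSeq fun k => (Tof P f)^[k + 1] φ x :=
    fun x => ⟨Cφ, fun k => hiterbd (k + 1) x⟩
  have hBstar : BStar P f B g = φ - BLof P f B φ := by
    funext x
    have h1 : (fun k => gk P f g (k + 1) x) =
        fun k => φ x * (fun _ : ℕ => (1 : ℝ)) k + (-1) * (Tof P f)^[k + 1] φ x := by
      funext k
      rw [hgk]
      ring
    simp only [BStar, Pi.sub_apply, BLof, h1]
    rw [B.map_add _ _ ⟨|φ x|, fun _ => by simp [abs_mul]⟩
        ⟨Cφ, fun k => by simpa [abs_mul] using hiterbd (k + 1) x⟩,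
      B.map_smul (φ x) _ ⟨1, fun _ => by simp⟩,
      B.map_smul (-1) _ (hbdd1 x), B.norm_one]
    ring
  obtain ⟨hBLB, hBL0, hBL1⟩ := hB φ hφB hφ0 hφ1
  refine ⟨hGbdd, ?_, ?_, ?_⟩
  · rw [hBstar]; exact Submodule.sub_mem _ hφB hBLB
  · rw [hBstar]; simp [hφ0, hBL0]
  · rw [hBstar]; simp [hφ1, hBL1]
end
end

section
/- Assume (H2). Then ∫_Ω f(x,ω) dP(ω) = x for every x ∈ [0,1]; consequently every affine function φ(x) = αx + β (α, β ∈ ℝ) satisfies equation (E_0), i.e. φ(x) = ∫_Ω φ(f(x,ω)) dP(ω) for every x ∈ [0,1]. -/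
open MeasureTheory unitInterval

noncomputable section

/-- Under (H2), `∫_Ω f(x,ω) dP(ω) = x` for every `x ∈ [0,1]`;
consequently every affine function `φ(x) = αx + β` satisfies equation (E_0). -/
theorem stmt_18 {Ω : Type*} [MeasurableSpace Ω] (P : Measure Ω) [IsProbabilityMeasure P]
    (f : unitInterval → Ω → unitInterval)
    (hf0 : ∀ ω, f 0 ω = 0) (hf1 : ∀ ω, f 1 ω = 1)
    (hfmeas : ∀ x, Measurable (f x))
    (hH2 : ∀ x y : unitInterval,
      ∫ ω, |(f x ω : ℝ) - (f y ω : ℝ)| ∂P ≤ |(x : ℝ) - (y : ℝ)|) :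
    (∀ x : unitInterval, ∫ ω, (f x ω : ℝ) ∂P = (x : ℝ)) ∧
    ∀ α β : ℝ,
      (∀ x : unitInterval, Measurable fun ω => α * (f x ω : ℝ) + β) ∧
      ∀ x : unitInterval, α * (x : ℝ) + β = ∫ ω, (α * (f x ω : ℝ) + β) ∂P := by
  have hmeas : ∀ x : unitInterval, Measurable fun ω => (f x ω : ℝ) :=
    fun x => measurable_subtype_coe.comp (hfmeas x)
  have hint : ∀ x : unitInterval, Integrable (fun ω => (f x ω : ℝ)) P := by
    intro x
    apply (integrable_const (1:ℝ)).mono' (hmeas x).aestronglyMeasurable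
    filter_upwards with ω
    rw [Real.norm_eq_abs, abs_of_nonneg (f x ω).2.1]
    exact (f x ω).2.2
  have key : ∀ x : unitInterval, ∫ ω, (f x ω : ℝ) ∂P = (x : ℝ) := by
    intro x
    have h1 : ∫ ω, (f x ω : ℝ) ∂P ≤ (x : ℝ) := by
      have h := hH2 x 0
      simp only [hf0, Set.Icc.coe_zero, sub_zero] at h
      calc ∫ ω, (f x ω : ℝ) ∂P = ∫ ω, |(f x ω : ℝ)| ∂P := by
            apply integral_congr_ae; filter_upwards with ω
            exact (abs_of_nonneg (f x ω).2.1).symm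
        _ ≤ |(x:ℝ)| := h
        _ = (x : ℝ) := abs_of_nonneg x.2.1
    have h2 : (x:ℝ) ≤ ∫ ω, (f x ω : ℝ) ∂P := by
      have h := hH2 1 x
      simp only [hf1, Set.Icc.coe_one] at h
      have heq : ∫ ω, |1 - (f x ω : ℝ)| ∂P = 1 - ∫ ω, (f x ω : ℝ) ∂P := by
        have : ∫ ω, |1 - (f x ω : ℝ)| ∂P = ∫ ω, (1 - (f x ω : ℝ)) ∂P := by
          apply integral_congr_ae; filter_upwards with ω
          exact abs_of_nonneg (by linarith [(f x ω).2.2])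
        rw [this, integral_sub (integrable_const 1) (hint x)]
        simp
      rw [heq] at h
      have hx : |1 - (x:ℝ)| = 1 - (x:ℝ) := abs_of_nonneg (by linarith [x.2.2])
      rw [hx] at h
      linarith
    linarith
  refine ⟨key, fun α β => ⟨fun x => ((hmeas x).const_mul α).add_const β, fun x => ?_⟩⟩
  rw [integral_add ((hint x).const_mul α) (integrable_const β),
    integral_const_mul, key, integral_const]
  simp
end
end
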